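/- Linearization progress under the Polyak stepsize: under the setting of the context, with γ ∈ (0, 1] and γ_k := γ·(h(z) − h(z*))/‖Π_A v‖², one has ‖z − γ_k·P(A,λ)v − z*‖² ≤ ‖z − z*‖² − γ·(h(z) − h(z*))²/‖Π_A v‖² + 2·γ_k·⟨v − P(A,λ)v, z − z*⟩. -/

import Mathlib

/-! Expanding the square, the claim reduces to `γₖ² ‖P v‖² ≤ γₖ (2 ⟪v, z - z*⟫ - (h z - h z*))`.
The subgradient inequality gives `h z - h z* ≤ ⟪v, z - z*⟫`, so it suffices that
`‖P v‖ ≤ ‖Π_A v‖`: writing `P v = A u` with `A* A u + λ u = A* v = A* Π_A v`, pairing with `u` gives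
`‖A u‖² ≤ ‖A u‖² + λ ‖u‖² = ⟪Π_A v, A u⟫ ≤ ‖Π_A v‖ ‖A u‖`. The Polyak stepsize then turns
`γₖ² ‖Π_A v‖²` into `γ γₖ (h z - h z*) ≤ γₖ (h z - h z*)`. -/

open scoped RealInnerProductSpace

noncomputable section

variable {E Y : Type*} [NormedAddCommGroup E] [InnerProductSpace ℝ E] [FiniteDimensional ℝ E]
  [NormedAddCommGroup Y] [InnerProductSpace ℝ Y] [FiniteDimensional ℝ Y]

/-- `v` is a subgradient of `h` at `z`. -/
def IsSubgradientAt (h : Y → ℝ) (v z : Y) : Prop :=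
  ∀ y : Y, h z + ⟪v, y - z⟫ ≤ h y

/-- `B(A,λ) = (A*∘A + λ·id)⁻¹`. -/
def Bop (A : E →L[ℝ] Y) (lam : ℝ) : E →L[ℝ] E :=
  (ContinuousLinearMap.adjoint A ∘L A + lam • ContinuousLinearMap.id ℝ E).inverse

/-- `P(A,λ) = A ∘ B(A,λ) ∘ A*`. -/
def Pop (A : E →L[ℝ] Y) (lam : ℝ) : Y →L[ℝ] Y :=
  A ∘L Bop A lam ∘L ContinuousLinearMap.adjoint A

/-- `Π_A`, the orthogonal projection of `Y` onto the range of `A`. -/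
def projRange (A : E →L[ℝ] Y) : Y →L[ℝ] Y :=
  (LinearMap.range (A : E →ₗ[ℝ] Y)).subtypeL ∘L
    Submodule.orthogonalProjectionOnto (LinearMap.range (A : E →ₗ[ℝ] Y))

open scoped InnerProduct

section Regularization

variable {F G : Type*} [NormedAddCommGroup F] [InnerProductSpace ℝ F] [CompleteSpace F]
  [NormedAddCommGroup G] [InnerProductSpace ℝ G] [CompleteSpace G]

theorem inner_adjoint_comp_add_smul_id_apply_self (A : F →L[ℝ] G) (lam : ℝ) (u : F) :
    ⟪(A† ∘L A + lam • ContinuousLinearMap.id ℝ F) u, u⟫ = ‖A u‖ ^ 2 + lam * ‖u‖ ^ 2 := by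
  simp only [add_apply, ContinuousLinearMap.comp_apply,
    smul_apply, ContinuousLinearMap.id_apply, inner_add_left,
    ContinuousLinearMap.adjoint_inner_left, real_inner_smul_left, real_inner_self_eq_norm_sq]

theorem injective_adjoint_comp_add_smul_id (A : F →L[ℝ] G) {lam : ℝ} (hlam : 0 < lam) :
    Function.Injective (A† ∘L A + lam • ContinuousLinearMap.id ℝ F) := by
  refine (injective_iff_map_eq_zero _).2 fun u hu => ?_
  have hcoercive := inner_adjoint_comp_add_smul_id_apply_self A lam u
  rw [hu, inner_zero_left] at hcoercive
  have : ‖u‖ ^ 2 = 0 := by nlinarith [sq_nonneg ‖A u‖, sq_nonneg ‖u‖]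
  simpa using this

theorem isInvertible_adjoint_comp_add_smul_id [FiniteDimensional ℝ F] (A : F →L[ℝ] G) {lam : ℝ}
    (hlam : 0 < lam) : (A† ∘L A + lam • ContinuousLinearMap.id ℝ F).IsInvertible :=
  ⟨(LinearEquiv.ofInjectiveEndo _
      (injective_adjoint_comp_add_smul_id A hlam)).toContinuousLinearEquiv, rfl⟩

end Regularization

theorem adjoint_comp_add_smul_id_apply_Bop (A : E →L[ℝ] Y) {lam : ℝ} (hlam : 0 < lam) (x : E) :
    (A† ∘L A + lam • ContinuousLinearMap.id ℝ E) (Bop A lam x) = x :=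
  (isInvertible_adjoint_comp_add_smul_id A hlam).self_apply_inverse x

omit [FiniteDimensional ℝ Y] in
theorem inner_projRange_apply_left (A : E →L[ℝ] Y) (v : Y) (u : E) :
    ⟪projRange A v, A u⟫ = ⟪v, A u⟫ := by
  change ⟪(LinearMap.range (A : E →ₗ[ℝ] Y)).starProjection v, A u⟫ = _
  rw [Submodule.inner_starProjection_left_eq_right]
  exact congrArg _ (Submodule.starProjection_eq_self_iff.mpr (LinearMap.mem_range_self _ u))

theorem norm_Pop_apply_le (A : E →L[ℝ] Y) {lam : ℝ} (hlam : 0 < lam) (v : Y) :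
    ‖Pop A lam v‖ ≤ ‖projRange A v‖ := by
  set u := Bop A lam ((A†) v)
  have hnormal : ‖A u‖ ^ 2 + lam * ‖u‖ ^ 2 = ⟪projRange A v, A u⟫ := by
    rw [← inner_adjoint_comp_add_smul_id_apply_self, adjoint_comp_add_smul_id_apply_Bop A hlam,
      ContinuousLinearMap.adjoint_inner_left, inner_projRange_apply_left]
  have hsq : ‖A u‖ ^ 2 ≤ ‖projRange A v‖ * ‖A u‖ := by
    calc ‖A u‖ ^ 2 ≤ ‖A u‖ ^ 2 + lam * ‖u‖ ^ 2 := le_add_of_nonneg_right (by positivity)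
      _ = ⟪projRange A v, A u⟫ := hnormal
      _ ≤ ‖projRange A v‖ * ‖A u‖ := real_inner_le_norm _ _
  show ‖A u‖ ≤ _
  nlinarith [norm_nonneg (A u), norm_nonneg (projRange A v)]

omit [FiniteDimensional ℝ Y] in
theorem IsSubgradientAt.sub_le_inner {h : Y → ℝ} {v z : Y} (hv : IsSubgradientAt h v z) (y : Y) :
    h z - h y ≤ ⟪v, z - y⟫ := by
  have := hv y
  rw [← neg_sub, inner_neg_right] at this
  linarith

theorem norm_sub_polyak_smul_sq_le {F : Type*} [NormedAddCommGroup F] [InnerProductSpace ℝ F]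
    {d p v : F} {Δ n γ : ℝ} (hΔ : 0 ≤ Δ) (hvd : Δ ≤ ⟪v, d⟫) (hp : ‖p‖ ^ 2 ≤ n)
    (hγ0 : 0 ≤ γ) (hγ1 : γ ≤ 1) :
    ‖d - (γ * Δ / n) • p‖ ^ 2 ≤ ‖d‖ ^ 2 - γ * Δ ^ 2 / n + 2 * (γ * Δ / n) * ⟪v - p, d⟫ := by
  set t := γ * Δ / n
  have hn : 0 ≤ n := (sq_nonneg _).trans hp
  have ht : 0 ≤ t := by positivity
  have htn : t * n ≤ γ * Δ := by
    rcases hn.eq_or_lt with rfl | hn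
    · simp [t, mul_nonneg hγ0 hΔ]
    · exact (div_mul_cancel₀ _ hn.ne').le
  have hquad : t ^ 2 * ‖p‖ ^ 2 ≤ t * Δ :=
    calc t ^ 2 * ‖p‖ ^ 2 ≤ t ^ 2 * n := by gcongr
      _ = t * (t * n) := by ring
      _ ≤ t * (γ * Δ) := by gcongr
      _ ≤ t * Δ := by gcongr; exact mul_le_of_le_one_left hΔ hγ1
  have hlin : t * Δ ≤ t * ⟪v, d⟫ := by gcongr
  have hexpand : ‖d - t • p‖ ^ 2 = ‖d‖ ^ 2 - 2 * t * ⟪p, d⟫ + t ^ 2 * ‖p‖ ^ 2 := by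
    rw [norm_sub_sq_real, real_inner_smul_right, real_inner_comm, norm_smul, Real.norm_eq_abs,
      mul_pow, sq_abs]
    ring
  have hsq : γ * Δ ^ 2 / n = t * Δ := by ring
  rw [hexpand, hsq, inner_sub_left]
  linarith

theorem lmm_linearization_progress_general
    (h : Y → ℝ)
    (A : E →L[ℝ] Y) (lam : ℝ) (hlam : 0 < lam)
    (z zs : Y) (hzs : h zs ≤ h z)
    (v : Y) (hv : IsSubgradientAt h v z)
    (γ : ℝ) (hγ0 : 0 < γ) (hγ1 : γ ≤ 1)
    (γk : ℝ) (hγk : γk = γ * (h z - h zs) / ‖projRange A v‖ ^ 2) :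
    ‖z - γk • Pop A lam v - zs‖ ^ 2 ≤
      ‖z - zs‖ ^ 2 - γ * (h z - h zs) ^ 2 / ‖projRange A v‖ ^ 2 +
        2 * γk * ⟪v - Pop A lam v, z - zs⟫ := by
  have hP : ‖Pop A lam v‖ ^ 2 ≤ ‖projRange A v‖ ^ 2 := by
    gcongr; exact norm_Pop_apply_le A hlam v
  rw [sub_right_comm, hγk]
  exact norm_sub_polyak_smul_sq_le (sub_nonneg.mpr hzs) (hv.sub_le_inner zs) hP hγ0.le hγ1

/-- Linearization progress under the Polyak stepsize. -/
theorem lmm_linearization_progress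
    (h : Y → ℝ) (hconv : ConvexOn ℝ Set.univ h)
    (A : E →L[ℝ] Y) (lam : ℝ) (hlam : 0 < lam)
    (z zs : Y) (hzs : h zs ≤ h z)
    (v : Y) (hv : IsSubgradientAt h v z) (hPiv : projRange A v ≠ 0)
    (γ : ℝ) (hγ0 : 0 < γ) (hγ1 : γ ≤ 1)
    (γk : ℝ) (hγk : γk = γ * (h z - h zs) / ‖projRange A v‖ ^ 2) :
    ‖z - γk • Pop A lam v - zs‖ ^ 2 ≤
      ‖z - zs‖ ^ 2 - γ * (h z - h zs) ^ 2 / ‖projRange A v‖ ^ 2 +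
        2 * γk * ⟪v - Pop A lam v, z - zs⟫ :=
  lmm_linearization_progress_general h A lam hlam z zs hzs v hv γ hγ0 hγ1 γk hγk
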